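/- arXiv:2401.14355 — 4 statements merged into one kernel-verified Lean document; each statement's English description precedes it below -/
import Mathlib

section
/- The IPW-plus-outcome-regression representation of the control-group trend among the treated is exact: E[ (A/P(A=1))·μ₀Δ(X) + ((1−A)/P(A=1))·(π_A(X)/(1−π_A(X)))·((Y₁−Y₀) − μ₀Δ(X)) ] = E[ E[Y₁ − Y₀ | A=0, X] | A=1 ], whenever either μ̄₀Δ = μ₀Δ (correct outcome model) or π̄_A = π_A (correct propensity model) is used in place of the true functions. -/
open MeasureTheory
open scoped ENNReal

/-!
Write `D = Y₁ - Y₀`, `w = π̄ / (1 - π̄)`, `d = μ₀Δ - μ̄` and `R = (1 - A) (D - μ₀Δ(X))`. Then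
`P(A=1) θ₀(μ̄, π̄) - E[A μ₀Δ(X)] = E[w(X) R] + E[(1 - A) w(X) d(X) - A d(X)]`.
The definition of `μ₀Δ` says that `R` integrates to zero over every event `{X ∈ s}`, so by the
tower property for `σ(X)` the first term vanishes. The second vanishes trivially when `μ̄ = μ₀Δ`;
when `π̄ = π_A` it equals `E[d(X) / (1 - π_A(X)) · (π_A(X) - A)]`, which vanishes for the same
reason, `π_A(X) - A` integrating to zero over every `{X ∈ s}`.

The weight `w` is unbounded, so integrability needs care: `(1 - A)(D - μ̄(X))` is integrable
because `w ≥ π̄ ≥ ε`, and `(1 - A) d(X) / (1 - π_A(X))` because, by the tower property for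
nonnegative functions, its `L¹` norm equals that of `d(X)`.
-/

namespace MeasureTheory

variable {Ω 𝒳 : Type*} [MeasurableSpace Ω] [MeasurableSpace 𝒳] {P : Measure Ω} {X : Ω → 𝒳}

theorem integral_comp_mul_eq_zero_of_setIntegral_preimage_eq_zero [IsFiniteMeasure P]
    (hX : Measurable X) {Z : Ω → ℝ} (hZ : Integrable Z P)
    (hZX : ∀ s, MeasurableSet s → ∫ ω in X ⁻¹' s, Z ω ∂P = 0)
    {g : 𝒳 → ℝ} (hg : Measurable g) (hgZ : Integrable (fun ω => g (X ω) * Z ω) P) :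
    ∫ ω, g (X ω) * Z ω ∂P = 0 := by
  have hm : MeasurableSpace.comap X ‹_› ≤ ‹MeasurableSpace Ω› := hX.comap_le
  have hcond : (0 : Ω → ℝ) =ᵐ[P] P[Z | MeasurableSpace.comap X ‹_›] := by
    refine ae_eq_condExp_of_forall_setIntegral_eq hm hZ (fun _ _ _ => integrableOn_zero) ?_
      aestronglyMeasurable_zero
    rintro _ ⟨s, hs, rfl⟩ -
    simp [hZX s hs]
  have hgX : StronglyMeasurable[MeasurableSpace.comap X ‹_›] (g ∘ X) :=
    (hg.comp (comap_measurable X)).stronglyMeasurable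
  calc ∫ ω, g (X ω) * Z ω ∂P
      = ∫ ω, P[(g ∘ X) * Z | MeasurableSpace.comap X ‹_›] ω ∂P := (integral_condExp hm).symm
    _ = ∫ ω, ((g ∘ X) * P[Z | MeasurableSpace.comap X ‹_›]) ω ∂P :=
        integral_congr_ae (condExp_mul_of_stronglyMeasurable_left hgX hgZ hZ)
    _ = ∫ _, (0 : ℝ) ∂P := integral_congr_ae (hcond.mono fun ω h => by simp [← h])
    _ = 0 := integral_zero _ _

theorem lintegral_comp_mul_eq_of_setLIntegral_preimage_eq (hX : Measurable X)
    {U V : Ω → ℝ≥0∞} (hU : AEMeasurable U P) (hV : AEMeasurable V P)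
    (hUV : ∀ s, MeasurableSet s → ∫⁻ ω in X ⁻¹' s, U ω ∂P = ∫⁻ ω in X ⁻¹' s, V ω ∂P)
    {g : 𝒳 → ℝ≥0∞} (hg : Measurable g) :
    ∫⁻ ω, g (X ω) * U ω ∂P = ∫⁻ ω, g (X ω) * V ω ∂P := by
  have hmap : (P.withDensity U).map X = (P.withDensity V).map X := by
    ext s hs
    rw [Measure.map_apply hX hs, Measure.map_apply hX hs, withDensity_apply _ (hX hs),
      withDensity_apply _ (hX hs), hUV s hs]
  have key : ∀ W : Ω → ℝ≥0∞, AEMeasurable W P →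
      ∫⁻ ω, g (X ω) * W ω ∂P = ∫⁻ x, g x ∂(P.withDensity W).map X := fun W hW => by
    rw [lintegral_map hg hX]
    exact ((lintegral_withDensity_eq_lintegral_mul₀ hW (hg.comp hX).aemeasurable).trans
      (lintegral_congr fun ω => mul_comm _ _)).symm
  rw [key U hU, key V hV, hmap]

theorem Integrable.comp_mul_of_setIntegral_preimage_eq (hX : Measurable X)
    {U V : Ω → ℝ} (hU : Integrable U P) (hV : Integrable V P)
    (hU0 : 0 ≤ᵐ[P] U) (hV0 : 0 ≤ᵐ[P] V)
    (hUV : ∀ s, MeasurableSet s → ∫ ω in X ⁻¹' s, U ω ∂P = ∫ ω in X ⁻¹' s, V ω ∂P)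
    {g : 𝒳 → ℝ} (hg : Measurable g) (hgV : Integrable (fun ω => g (X ω) * V ω) P) :
    Integrable (fun ω => g (X ω) * U ω) P := by
  have enorm_eq : ∀ W : Ω → ℝ, 0 ≤ᵐ[P] W →
      ∫⁻ ω, ‖g (X ω) * W ω‖ₑ ∂P = ∫⁻ ω, ‖g (X ω)‖ₑ * ENNReal.ofReal (W ω) ∂P := fun W hW =>
    lintegral_congr_ae <| hW.mono fun ω h => by
      simp only
      rw [enorm_mul, Real.enorm_of_nonneg h]
  refine ⟨(hg.comp hX).aestronglyMeasurable.mul hU.1, ?_⟩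
  rw [hasFiniteIntegral_iff_enorm, enorm_eq U hU0,
    lintegral_comp_mul_eq_of_setLIntegral_preimage_eq hX hU.1.aemeasurable.ennreal_ofReal
      hV.1.aemeasurable.ennreal_ofReal _ hg.enorm, ← enorm_eq V hV0]
  · exact hgV.2
  · intro s hs
    rw [← ofReal_integral_eq_lintegral_ofReal hU.restrict (ae_restrict_of_ae hU0),
      ← ofReal_integral_eq_lintegral_ofReal hV.restrict (ae_restrict_of_ae hV0), hUV s hs]

theorem Integrable.of_mul_left_of_le {g f : Ω → ℝ} {ε : ℝ} (hε : 0 < ε) (hg : AEMeasurable g P)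
    (hgε : ∀ᵐ ω ∂P, ε ≤ g ω)
    (h : Integrable (fun ω => g ω * f ω) P) : Integrable f P := by
  refine (h.bdd_mul (c := ε⁻¹) hg.inv.aestronglyMeasurable ?_).congr ?_
  · filter_upwards [hgε] with ω hω
    rw [Pi.inv_apply, norm_inv, Real.norm_of_nonneg (hε.le.trans hω)]
    exact inv_anti₀ hε hω
  · filter_upwards [hgε] with ω hω
    rw [Pi.inv_apply, ← mul_assoc, inv_mul_cancel₀ (hε.trans_le hω).ne', one_mul]

end MeasureTheory

section Binary

variable {Ω : Type*} {A : Ω → ℝ}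

theorem mul_eq_indicator_of_binary (hA : ∀ ω, A ω = 0 ∨ A ω = 1) (f : Ω → ℝ) :
    (fun ω => A ω * f ω) = {ω | A ω = 1}.indicator f := by
  funext ω
  rcases hA ω with h | h <;> simp [Set.indicator, h]

theorem one_sub_mul_eq_indicator_of_binary (hA : ∀ ω, A ω = 0 ∨ A ω = 1) (f : Ω → ℝ) :
    (fun ω => (1 - A ω) * f ω) = {ω | A ω = 0}.indicator f := by
  funext ω
  rcases hA ω with h | h <;> simp [Set.indicator, h]

theorem MeasureTheory.Integrable.binary_mul [MeasurableSpace Ω] {P : Measure Ω}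
    (hA : ∀ ω, A ω = 0 ∨ A ω = 1) (hAm : Measurable A) {f : Ω → ℝ} (hf : Integrable f P) :
    Integrable (fun ω => A ω * f ω) P := by
  rw [mul_eq_indicator_of_binary hA]
  exact hf.indicator (hAm (measurableSet_singleton 1))

theorem MeasureTheory.Integrable.one_sub_binary_mul [MeasurableSpace Ω] {P : Measure Ω}
    (hA : ∀ ω, A ω = 0 ∨ A ω = 1) (hAm : Measurable A) {f : Ω → ℝ} (hf : Integrable f P) :
    Integrable (fun ω => (1 - A ω) * f ω) P := by
  rw [one_sub_mul_eq_indicator_of_binary hA]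
  exact hf.indicator (hAm (measurableSet_singleton 0))

theorem integrable_of_binary [MeasurableSpace Ω] {P : Measure Ω} [IsFiniteMeasure P]
    (hA : ∀ ω, A ω = 0 ∨ A ω = 1) (hAm : Measurable A) : Integrable A P := by
  simpa using (integrable_const (1 : ℝ)).binary_mul hA hAm (P := P)

theorem integral_binary_mul_eq_setIntegral [MeasurableSpace Ω] {P : Measure Ω}
    (hA : ∀ ω, A ω = 0 ∨ A ω = 1) (hAm : Measurable A) (f : Ω → ℝ) :
    ∫ ω, A ω * f ω ∂P = ∫ ω in {ω | A ω = 1}, f ω ∂P := by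
  rw [mul_eq_indicator_of_binary hA]
  exact integral_indicator (hAm (measurableSet_singleton 1))

end Binary

section ControlScore

variable {Ω 𝒳 : Type*} [MeasurableSpace Ω] [MeasurableSpace 𝒳] {P : Measure Ω}
  {X : Ω → 𝒳} {A D : Ω → ℝ} {μ₀ μ π : 𝒳 → ℝ}

/-- `P(A = 1)` times the integrand of `θ₀(μ, π)`, with `D = Y₁ - Y₀`. -/
noncomputable def controlScore (A D : Ω → ℝ) (X : Ω → 𝒳) (μ π : 𝒳 → ℝ) (ω : Ω) : ℝ :=
  A ω * μ (X ω) + (1 - A ω) * (π (X ω) / (1 - π (X ω))) * (D ω - μ (X ω))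

theorem integrable_controlResidual {ε : ℝ} (hε : 0 < ε) (hA : ∀ ω, A ω = 0 ∨ A ω = 1)
    (hAm : Measurable A) (hX : Measurable X) (hπ : Measurable π)
    (hπε : ∀ᵐ ω ∂P, ε ≤ π (X ω) ∧ π (X ω) < 1) (hS : Integrable (controlScore A D X μ π) P)
    (hμ : Integrable (fun ω => μ (X ω)) P) (hμ₀ : Integrable (fun ω => μ₀ (X ω)) P) :
    Integrable (fun ω => (1 - A ω) * (D ω - μ₀ (X ω))) P := by
  have hweighted : Integrable
      (fun ω => π (X ω) / (1 - π (X ω)) * ((1 - A ω) * (D ω - μ (X ω)))) P :=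
    (hS.sub (hμ.binary_mul hA hAm)).congr <| ae_of_all _ fun ω => by
      simp only [controlScore, Pi.sub_apply]; ring
  have hres := hweighted.of_mul_left_of_le hε
    ((hπ.comp hX).div (measurable_const.sub (hπ.comp hX))).aemeasurable <|
    hπε.mono fun ω h => h.1.trans <|
      le_div_self (hε.le.trans h.1) (sub_pos.2 h.2) (sub_le_self _ (hε.le.trans h.1))
  exact (hres.sub ((hμ₀.sub hμ).one_sub_binary_mul hA hAm)).congr <| ae_of_all _ fun ω => by
    simp only [Pi.sub_apply]; ring

theorem setIntegral_preimage_controlResidual_eq_zero (hA : ∀ ω, A ω = 0 ∨ A ω = 1)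
    (hAm : Measurable A) (hR : Integrable (fun ω => (1 - A ω) * (D ω - μ₀ (X ω))) P)
    (hμ₀ : Integrable (fun ω => μ₀ (X ω)) P)
    (hμ₀D : ∀ s, MeasurableSet s → ∫ ω in {ω | X ω ∈ s ∧ A ω = 0}, D ω ∂P
      = ∫ ω in {ω | X ω ∈ s ∧ A ω = 0}, μ₀ (X ω) ∂P)
    {s : Set 𝒳} (hs : MeasurableSet s) :
    ∫ ω in X ⁻¹' s, (1 - A ω) * (D ω - μ₀ (X ω)) ∂P = 0 := by
  have hA0 : MeasurableSet {ω | A ω = 0} := hAm (measurableSet_singleton 0)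
  rw [one_sub_mul_eq_indicator_of_binary hA, integrable_indicator_iff hA0] at hR
  have hD : IntegrableOn D {ω | A ω = 0} P :=
    Integrable.congr (hR.add hμ₀.integrableOn) (ae_of_all _ fun ω => sub_add_cancel _ _)
  rw [one_sub_mul_eq_indicator_of_binary hA, setIntegral_indicator hA0,
    integral_sub (hD.mono_set Set.inter_subset_right) hμ₀.integrableOn, sub_eq_zero]
  exact hμ₀D s hs

variable [IsFiniteMeasure P]

theorem integral_controlScore_of_outcome (hA : ∀ ω, A ω = 0 ∨ A ω = 1) (hAm : Measurable A)
    (hX : Measurable X) (hπ : Measurable π) (hS : Integrable (controlScore A D X μ₀ π) P)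
    (hR : Integrable (fun ω => (1 - A ω) * (D ω - μ₀ (X ω))) P)
    (hR0 : ∀ s, MeasurableSet s → ∫ ω in X ⁻¹' s, (1 - A ω) * (D ω - μ₀ (X ω)) ∂P = 0)
    (hμ₀ : Integrable (fun ω => μ₀ (X ω)) P) :
    ∫ ω, controlScore A D X μ₀ π ω ∂P = ∫ ω, A ω * μ₀ (X ω) ∂P := by
  have hAμ₀ := hμ₀.binary_mul hA hAm
  have hsplit : controlScore A D X μ₀ π = fun ω => A ω * μ₀ (X ω)
      + π (X ω) / (1 - π (X ω)) * ((1 - A ω) * (D ω - μ₀ (X ω))) := by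
    funext ω; simp only [controlScore]; ring
  have hw : Measurable fun x => π x / (1 - π x) := hπ.div (measurable_const.sub hπ)
  rw [hsplit] at hS ⊢
  have hwR := (hS.sub hAμ₀).congr (ae_of_all _ fun ω => add_sub_cancel_left _ _)
  rw [integral_add hAμ₀ hwR,
    integral_comp_mul_eq_zero_of_setIntegral_preimage_eq_zero hX hR hR0 hw hwR, add_zero]

theorem integrable_comp_of_ae_nonneg_of_lt_one (hX : Measurable X) (hπ : Measurable π)
    (hπ01 : ∀ᵐ ω ∂P, 0 ≤ π (X ω) ∧ π (X ω) < 1) : Integrable (fun ω => π (X ω)) P :=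
  .of_bound (hπ.comp hX).aestronglyMeasurable 1 <| hπ01.mono fun ω h => by
    rw [Real.norm_of_nonneg h.1]; exact h.2.le

theorem integrable_comp_div_one_sub_mul_propensity_sub (hA : ∀ ω, A ω = 0 ∨ A ω = 1)
    (hAm : Measurable A) (hX : Measurable X) (hπ : Measurable π)
    (hπ01 : ∀ᵐ ω ∂P, 0 ≤ π (X ω) ∧ π (X ω) < 1)
    (hπA : ∀ s, MeasurableSet s → ∫ ω in X ⁻¹' s, A ω ∂P = ∫ ω in X ⁻¹' s, π (X ω) ∂P)
    {f : 𝒳 → ℝ} (hf : Measurable f) (hfX : Integrable (fun ω => f (X ω)) P) :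
    Integrable (fun ω => f (X ω) / (1 - π (X ω)) * (π (X ω) - A ω)) P := by
  have hAint := integrable_of_binary (P := P) hA hAm
  have hπX := integrable_comp_of_ae_nonneg_of_lt_one hX hπ hπ01
  have hf1π : ∀ᵐ ω ∂P, f (X ω) / (1 - π (X ω)) * (1 - π (X ω)) = f (X ω) :=
    hπ01.mono fun ω h => div_mul_cancel₀ _ (sub_pos.2 h.2).ne'
  have hf1A : Integrable (fun ω => f (X ω) / (1 - π (X ω)) * (1 - A ω)) P :=
    Integrable.comp_mul_of_setIntegral_preimage_eq (U := fun ω => 1 - A ω)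
      (V := fun ω => 1 - π (X ω)) (g := fun x => f x / (1 - π x)) hX
      ((integrable_const 1).sub hAint) ((integrable_const 1).sub hπX)
      (ae_of_all _ fun ω => by rcases hA ω with h | h <;> simp [h])
      (hπ01.mono fun ω h => sub_nonneg.2 h.2.le)
      (fun s hs => by
        rw [integral_sub (integrable_const 1).integrableOn hAint.integrableOn,
          integral_sub (integrable_const 1).integrableOn hπX.integrableOn, hπA s hs])
      (hf.div (measurable_const.sub hπ)) (hfX.congr (hf1π.mono fun ω h => h.symm))
  exact (hf1A.sub hfX).congr <| hf1π.mono fun ω h => by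
    simp only [Pi.sub_apply]; nth_rw 2 [← h]; ring

theorem integral_controlScore_of_propensity (hA : ∀ ω, A ω = 0 ∨ A ω = 1) (hAm : Measurable A)
    (hX : Measurable X) (hπ : Measurable π) (hμ : Measurable μ) (hμ₀m : Measurable μ₀)
    (hπ01 : ∀ᵐ ω ∂P, 0 ≤ π (X ω) ∧ π (X ω) < 1)
    (hπA : ∀ s, MeasurableSet s → ∫ ω in X ⁻¹' s, A ω ∂P = ∫ ω in X ⁻¹' s, π (X ω) ∂P)
    (hS : Integrable (controlScore A D X μ π) P)
    (hR : Integrable (fun ω => (1 - A ω) * (D ω - μ₀ (X ω))) P)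
    (hR0 : ∀ s, MeasurableSet s → ∫ ω in X ⁻¹' s, (1 - A ω) * (D ω - μ₀ (X ω)) ∂P = 0)
    (hμX : Integrable (fun ω => μ (X ω)) P) (hμ₀ : Integrable (fun ω => μ₀ (X ω)) P) :
    ∫ ω, controlScore A D X μ π ω ∂P = ∫ ω, A ω * μ₀ (X ω) ∂P := by
  set k : 𝒳 → ℝ := fun x => (μ₀ x - μ x) / (1 - π x)
  have hk : Measurable k := (hμ₀m.sub hμ).div (measurable_const.sub hπ)
  have hw : Measurable fun x => π x / (1 - π x) := hπ.div (measurable_const.sub hπ)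
  have hAμ₀ := hμ₀.binary_mul hA hAm
  have hkZ : Integrable (fun ω => k (X ω) * (π (X ω) - A ω)) P :=
    integrable_comp_div_one_sub_mul_propensity_sub hA hAm hX hπ hπ01 hπA (hμ₀m.sub hμ)
      (hμ₀.sub hμX)
  have hsplit : controlScore A D X μ π =ᵐ[P] fun ω => A ω * μ₀ (X ω)
      + π (X ω) / (1 - π (X ω)) * ((1 - A ω) * (D ω - μ₀ (X ω)))
      + k (X ω) * (π (X ω) - A ω) := by
    filter_upwards [hπ01] with ω h
    have : 1 - π (X ω) ≠ 0 := (sub_pos.2 h.2).ne'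
    simp only [controlScore, k]
    field_simp
    ring
  have hwR : Integrable (fun ω => π (X ω) / (1 - π (X ω)) * ((1 - A ω) * (D ω - μ₀ (X ω)))) P :=
    ((hS.sub hAμ₀).sub hkZ).congr <| hsplit.mono fun ω h => by
      simp only [Pi.sub_apply, h]; ring
  have hπX := integrable_comp_of_ae_nonneg_of_lt_one hX hπ hπ01
  have hAint := integrable_of_binary (P := P) hA hAm
  have hZ0 : ∀ s, MeasurableSet s → ∫ ω in X ⁻¹' s, (π (X ω) - A ω) ∂P = 0 := fun s hs => by
    rw [integral_sub hπX.integrableOn hAint.integrableOn, hπA s hs, sub_self]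
  rw [integral_congr_ae hsplit, integral_add ?_ hkZ, integral_add hAμ₀ hwR,
    integral_comp_mul_eq_zero_of_setIntegral_preimage_eq_zero hX hR hR0 hw hwR,
    integral_comp_mul_eq_zero_of_setIntegral_preimage_eq_zero (Z := fun ω => π (X ω) - A ω) hX
      (hπX.sub hAint) hZ0 hk hkZ,
    add_zero, add_zero]
  exact hAμ₀.add hwR

end ControlScore

theorem double_robustness_control_component_general
    {Ω 𝒳 : Type*} [MeasurableSpace Ω] [MeasurableSpace 𝒳]
    (P : Measure Ω) [IsProbabilityMeasure P]
    (A : Ω → ℝ) (X : Ω → 𝒳) (Y0 Y1 : Ω → ℝ) (πA μ0Δ πb μb : 𝒳 → ℝ) (ε : ℝ)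
    (hε : 0 < ε)
    (hA01 : ∀ ω, A ω = 0 ∨ A ω = 1)
    (hAmeas : Measurable A) (hXmeas : Measurable X)
    (hμmeas : Measurable μ0Δ)
    (hπbmeas : Measurable πb) (hμbmeas : Measurable μb)
    (hPA : 0 < (P {ω | A ω = 1}).toReal)
    (hπbbd : ∀ᵐ ω ∂P, ε ≤ πb (X ω) ∧ πb (X ω) < 1)
    (hμbbd : ∃ C : ℝ, ∀ x, |μb x| ≤ C)
    -- `π_A(X) = P(A=1 | X)`:
    (hπdef : ∀ s : Set 𝒳, MeasurableSet s →
      ∫ ω in {ω | X ω ∈ s}, A ω ∂P = ∫ ω in {ω | X ω ∈ s}, πA (X ω) ∂P)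
    -- `μ₀Δ(X) = E[Y₁ - Y₀ | A = 0, X]`:
    (hμdef : ∀ s : Set 𝒳, MeasurableSet s →
      ∫ ω in {ω | X ω ∈ s ∧ A ω = 0}, (Y1 ω - Y0 ω) ∂P
        = ∫ ω in {ω | X ω ∈ s ∧ A ω = 0}, μ0Δ (X ω) ∂P)
    (hint : Integrable (fun ω =>
      (A ω / (P {ω | A ω = 1}).toReal) * μb (X ω)
        + ((1 - A ω) / (P {ω | A ω = 1}).toReal) * (πb (X ω) / (1 - πb (X ω)))
          * ((Y1 ω - Y0 ω) - μb (X ω))) P)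
    (hintμ0 : Integrable (fun ω => μ0Δ (X ω)) P)
    -- at least one of the two candidate models is correct:
    (hcase : μb = μ0Δ ∨ πb = πA) :
    ∫ ω, ((A ω / (P {ω | A ω = 1}).toReal) * μb (X ω)
        + ((1 - A ω) / (P {ω | A ω = 1}).toReal) * (πb (X ω) / (1 - πb (X ω)))
          * ((Y1 ω - Y0 ω) - μb (X ω))) ∂P
      = (∫ ω in {ω | A ω = 1}, μ0Δ (X ω) ∂P) / (P {ω | A ω = 1}).toReal := by
  obtain ⟨C, hC⟩ := hμbbd
  have hscore : (fun ω => (A ω / (P {ω | A ω = 1}).toReal) * μb (X ω)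
        + ((1 - A ω) / (P {ω | A ω = 1}).toReal) * (πb (X ω) / (1 - πb (X ω)))
          * ((Y1 ω - Y0 ω) - μb (X ω)))
      = fun ω => (P {ω | A ω = 1}).toReal⁻¹ * controlScore A (fun ω => Y1 ω - Y0 ω) X μb πb ω := by
    funext ω; simp only [controlScore]; ring
  rw [hscore, integrable_const_mul_iff (inv_pos.2 hPA).ne'.isUnit] at hint
  have hμbX : Integrable (fun ω => μb (X ω)) P :=
    .of_bound (hμbmeas.comp hXmeas).aestronglyMeasurable C (ae_of_all _ fun ω => hC (X ω))
  have hR := integrable_controlResidual hε hA01 hAmeas hXmeas hπbmeas hπbbd hint hμbX hintμ0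
  have hR0 := fun s (hs : MeasurableSet s) =>
    setIntegral_preimage_controlResidual_eq_zero hA01 hAmeas hR hintμ0 hμdef hs
  rw [hscore, integral_const_mul, ← integral_binary_mul_eq_setIntegral hA01 hAmeas,
    inv_mul_eq_div]
  congr 1
  rcases hcase with rfl | rfl
  · exact integral_controlScore_of_outcome hA01 hAmeas hXmeas hπbmeas hint hR hR0 hintμ0
  · exact integral_controlScore_of_propensity hA01 hAmeas hXmeas hπbmeas hμbmeas hμmeas
      (hπbbd.mono fun ω h => ⟨hε.le.trans h.1, h.2⟩) hπdef hint hR hR0 hμbX hintμ0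

/-- **Double robustness of the control-trend component.**  With
`θ₀(μ̄,π̄) = E[(A/P(A=1))·μ̄(X) + ((1-A)/P(A=1))·(π̄(X)/(1-π̄(X)))·((Y₁-Y₀) - μ̄(X))]`,
if either the outcome model is correct (`μ̄ = μ₀Δ` with `μ₀Δ(X) = E[Y₁-Y₀|A=0,X]`) or the
propensity model is correct (`π̄ = π_A` with `π_A(X) = P(A=1|X)`), then
`θ₀(μ̄,π̄) = E[E[Y₁-Y₀|A=0,X] | A=1]`, the conditional expectation given the event `A=1`
being `E[μ₀Δ(X)·1{A=1}]/P(A=1)`. -/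
theorem double_robustness_control_component
    {Ω 𝒳 : Type*} [MeasurableSpace Ω] [MeasurableSpace 𝒳]
    (P : Measure Ω) [IsProbabilityMeasure P]
    (A : Ω → ℝ) (X : Ω → 𝒳) (Y0 Y1 : Ω → ℝ) (πA μ0Δ πb μb : 𝒳 → ℝ) (ε : ℝ)
    (hε : 0 < ε)
    (hA01 : ∀ ω, A ω = 0 ∨ A ω = 1)
    (hAmeas : Measurable A) (hXmeas : Measurable X)
    (hπmeas : Measurable πA) (hμmeas : Measurable μ0Δ)
    (hπbmeas : Measurable πb) (hμbmeas : Measurable μb)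
    (hPA : 0 < (P {ω | A ω = 1}).toReal)
    (hπbd : ∀ᵐ ω ∂P, ε ≤ πA (X ω) ∧ πA (X ω) < 1)
    (hπbbd : ∀ᵐ ω ∂P, ε ≤ πb (X ω) ∧ πb (X ω) < 1)
    (hμbbd : ∃ C : ℝ, ∀ x, |μb x| ≤ C)
    -- `π_A(X) = P(A=1 | X)`:
    (hπdef : ∀ s : Set 𝒳, MeasurableSet s →
      ∫ ω in {ω | X ω ∈ s}, A ω ∂P = ∫ ω in {ω | X ω ∈ s}, πA (X ω) ∂P)
    -- `μ₀Δ(X) = E[Y₁ - Y₀ | A = 0, X]`: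
    (hμdef : ∀ s : Set 𝒳, MeasurableSet s →
      ∫ ω in {ω | X ω ∈ s ∧ A ω = 0}, (Y1 ω - Y0 ω) ∂P
        = ∫ ω in {ω | X ω ∈ s ∧ A ω = 0}, μ0Δ (X ω) ∂P)
    (hint : Integrable (fun ω =>
      (A ω / (P {ω | A ω = 1}).toReal) * μb (X ω)
        + ((1 - A ω) / (P {ω | A ω = 1}).toReal) * (πb (X ω) / (1 - πb (X ω)))
          * ((Y1 ω - Y0 ω) - μb (X ω))) P)
    (hintμ0 : Integrable (fun ω => μ0Δ (X ω)) P)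
    -- at least one of the two candidate models is correct:
    (hcase : μb = μ0Δ ∨ πb = πA) :
    ∫ ω, ((A ω / (P {ω | A ω = 1}).toReal) * μb (X ω)
        + ((1 - A ω) / (P {ω | A ω = 1}).toReal) * (πb (X ω) / (1 - πb (X ω)))
          * ((Y1 ω - Y0 ω) - μb (X ω))) ∂P
      = (∫ ω in {ω | A ω = 1}, μ0Δ (X ω) ∂P) / (P {ω | A ω = 1}).toReal :=
  double_robustness_control_component_general P A X Y0 Y1 πA μ0Δ πb μb ε hε hA01 hAmeas hXmeas
    hμmeas hπbmeas hμbmeas hPA hπbbd hμbbd hπdef hμdef hint hintμ0 hcase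
end

section
/- The population limit of the doubly robust control-component estimator satisfies θ̄₀ = E[μ₀Δ(X) | A=1] + E[ (μ₀Δ(X) − μ̄₀Δ(X)) · { (π̄_A(X)/(1−π̄_A(X))) / (π_A(X)/(1−π_A(X))) − 1 } | A=1 ], where θ̄₀ = E[ (A/P(A=1))·μ̄₀Δ(X) + ((1−A)/P(A=1))·(π̄_A(X)/(1−π̄_A(X)))·(Y₁ − Y₀ − μ̄₀Δ(X)) ]. -/
/-!
Write `ρ̄ = π̄_A/(1-π̄_A)` and `ρ = π_A/(1-π_A)` for the odds. Because `μ₀Δ(X)` is the mean of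
`Y₁ - Y₀` given `X` on the control arm, the control term `E[(1-A) ρ̄(X) (Y₁ - Y₀ - μ̄₀Δ(X))]` equals
`E[(1-A) ρ̄(X) (μ₀Δ - μ̄₀Δ)(X)]`. Because `π_A(X)` is the mean of `A` given `X`, this is
`E[(1-π_A) ρ̄ (μ₀Δ - μ̄₀Δ)(X)] = E[π_A (μ₀Δ - μ̄₀Δ) ρ̄/ρ (X)] = E[A (μ₀Δ - μ̄₀Δ) ρ̄/ρ (X)]`.
Adding the treated term `E[A μ̄₀Δ(X)]` gives `P(A=1)` times the right-hand side.

The two reweighting steps go through the laws of `X` under `A·P` and `π_A(X)·P`, which coincide.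
Unlike the pull-out property of conditional expectation, this needs no integrability of the
products and even transfers it, which matters because `ρ̄` is unbounded.
-/

open MeasureTheory

noncomputable def odds (p : ℝ) : ℝ := p / (1 - p)

theorem le_odds {p : ℝ} (hp : 0 ≤ p) (hp1 : p < 1) : p ≤ odds p :=
  le_div_self hp (by linarith) (by linarith)

theorem one_sub_mul_eq_mul_div_odds {p : ℝ} (hp : p ≠ 0) (hp1 : p ≠ 1) (a : ℝ) :
    (1 - p) * a = p * (a / odds p) := by
  have : 1 - p ≠ 0 := sub_ne_zero.mpr (Ne.symm hp1)
  rw [odds]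
  field_simp

theorem MeasureTheory.Integrable.mul_of_ae_mem_Icc {α : Type*} [MeasurableSpace α]
    {μ : Measure α} {a g : α → ℝ} (hg : Integrable g μ) (ha : AEStronglyMeasurable a μ)
    (ha01 : ∀ᵐ x ∂μ, a x ∈ Set.Icc 0 1) : Integrable (fun x => a x * g x) μ :=
  hg.bdd_mul ha (ha01.mono fun _ hx => by rw [Real.norm_eq_abs, abs_of_nonneg hx.1]; exact hx.2)

theorem MeasureTheory.Integrable.of_mul_of_ae_le {α : Type*} [MeasurableSpace α]
    {μ : Measure α} {w g : α → ℝ} {ε : ℝ} (hwg : Integrable (fun x => w x * g x) μ)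
    (hε : 0 < ε) (hwm : AEMeasurable w μ) (hw : ∀ᵐ x ∂μ, ε ≤ w x) :
    Integrable g μ := by
  refine (hwg.bdd_mul (f := fun x => (w x)⁻¹) (c := ε⁻¹) hwm.inv.aestronglyMeasurable ?_).congr
    ?_
  · filter_upwards [hw] with x hx
    rw [norm_inv, Real.norm_eq_abs, abs_of_pos (hε.trans_le hx)]
    exact inv_anti₀ hε hx
  · filter_upwards [hw] with x hx
    rw [inv_mul_cancel_left₀ (hε.trans_le hx).ne']

theorem setIntegral_setOf_eq_one_eq_integral_mul {Ω : Type*} [MeasurableSpace Ω]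
    {μ : Measure Ω} {A h : Ω → ℝ} (hA : ∀ ω, A ω = 0 ∨ A ω = 1)
    (hAm : MeasurableSet {ω | A ω = 1}) :
    ∫ ω in {ω | A ω = 1}, h ω ∂μ = ∫ ω, A ω * h ω ∂μ := by
  rw [← integral_indicator hAm]
  congr 1 with ω
  rcases hA ω with h0 | h1
  · simp [h0]
  · simp [h1]

theorem setIntegral_setOf_eq_zero_eq_integral_one_sub_mul {Ω : Type*} [MeasurableSpace Ω]
    {μ : Measure Ω} {A h : Ω → ℝ} (hA : ∀ ω, A ω = 0 ∨ A ω = 1)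
    (hAm : MeasurableSet {ω | A ω = 0}) :
    ∫ ω in {ω | A ω = 0}, h ω ∂μ = ∫ ω, (1 - A ω) * h ω ∂μ := by
  have hset : {ω | A ω = 0} = {ω | 1 - A ω = 1} := by ext ω; simp [sub_eq_self]
  rw [hset] at hAm ⊢
  exact setIntegral_setOf_eq_one_eq_integral_mul
    (fun ω => (hA ω).symm.imp (by simp [·]) (by simp [·])) hAm

theorem integral_mul_eq_of_forall_setIntegral_eq {Ω : Type*} {m m₀ : MeasurableSpace Ω}
    {μ : Measure Ω} (hm : m ≤ m₀) [SigmaFinite (μ.trim hm)]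
    {f d₁ d₂ : Ω → ℝ} (hf : StronglyMeasurable[m] f) (hd₁ : Integrable d₁ μ)
    (hd₂ : Integrable d₂ μ) (hfd₁ : Integrable (f * d₁) μ) (hfd₂ : Integrable (f * d₂) μ)
    (heq : ∀ s, MeasurableSet[m] s → ∫ x in s, d₁ x ∂μ = ∫ x in s, d₂ x ∂μ) :
    ∫ x, f x * d₁ x ∂μ = ∫ x, f x * d₂ x ∂μ := by
  have hcond : μ[d₁ | m] =ᵐ[μ] μ[d₂ | m] :=
    ae_eq_condExp_of_forall_setIntegral_eq hm hd₂ (fun _ _ _ => integrable_condExp.integrableOn)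
      (fun s hs _ => by rw [setIntegral_condExp hm hd₁ hs, heq s hs])
      stronglyMeasurable_condExp.aestronglyMeasurable
  calc ∫ x, f x * d₁ x ∂μ = ∫ x, (f * μ[d₁ | m]) x ∂μ := by
        rw [← integral_congr_ae (condExp_mul_of_stronglyMeasurable_left hf hfd₁ hd₁),
          integral_condExp hm]; rfl
    _ = ∫ x, (f * μ[d₂ | m]) x ∂μ := integral_congr_ae (hcond.mono fun x hx => by simp [hx])
    _ = ∫ x, f x * d₂ x ∂μ := by
        rw [← integral_congr_ae (condExp_mul_of_stronglyMeasurable_left hf hfd₂ hd₂),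
          integral_condExp hm]; rfl

section WeightedLaw

variable {Ω 𝒳 : Type*} [MeasurableSpace Ω] [MeasurableSpace 𝒳] {P : Measure Ω} {X : Ω → 𝒳}

noncomputable def weightedLaw (P : Measure Ω) (X : Ω → 𝒳) (f : Ω → ℝ) : Measure 𝒳 :=
  (P.withDensity fun ω => ENNReal.ofReal (f ω)).map X

theorem weightedLaw_eq_of_forall_setIntegral_preimage_eq (hX : Measurable X)
    {f₁ f₂ : Ω → ℝ} (hf₁ : 0 ≤ᵐ[P] f₁) (hf₂ : 0 ≤ᵐ[P] f₂)
    (hi₁ : Integrable f₁ P) (hi₂ : Integrable f₂ P)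
    (heq : ∀ s, MeasurableSet s → ∫ ω in X ⁻¹' s, f₁ ω ∂P = ∫ ω in X ⁻¹' s, f₂ ω ∂P) :
    weightedLaw P X f₁ = weightedLaw P X f₂ := by
  ext s hs
  rw [weightedLaw, weightedLaw, Measure.map_apply hX hs, Measure.map_apply hX hs,
    withDensity_apply _ (hX hs), withDensity_apply _ (hX hs),
    ← ofReal_integral_eq_lintegral_ofReal hi₁.restrict (ae_restrict_of_ae hf₁),
    ← ofReal_integral_eq_lintegral_ofReal hi₂.restrict (ae_restrict_of_ae hf₂), heq s hs]

theorem weightedLaw_eq_and_one_sub_of_forall_setIntegral_preimage_eq [IsFiniteMeasure P]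
    (hX : Measurable X)
    {f₁ f₂ : Ω → ℝ} (hf₁m : AEStronglyMeasurable f₁ P) (hf₂m : AEStronglyMeasurable f₂ P)
    (hf₁ : ∀ᵐ ω ∂P, f₁ ω ∈ Set.Icc 0 1) (hf₂ : ∀ᵐ ω ∂P, f₂ ω ∈ Set.Icc 0 1)
    (heq : ∀ s, MeasurableSet s → ∫ ω in X ⁻¹' s, f₁ ω ∂P = ∫ ω in X ⁻¹' s, f₂ ω ∂P) :
    weightedLaw P X f₁ = weightedLaw P X f₂ ∧
      weightedLaw P X (fun ω => 1 - f₁ ω) = weightedLaw P X (fun ω => 1 - f₂ ω) := by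
  have hbound : ∀ f : Ω → ℝ, (∀ᵐ ω ∂P, f ω ∈ Set.Icc 0 1) → ∀ᵐ ω ∂P, ‖f ω‖ ≤ 1 :=
    fun f hf => hf.mono fun ω hω => by rw [Real.norm_eq_abs, abs_of_nonneg hω.1]; exact hω.2
  have hi₁ := Integrable.of_bound hf₁m 1 (hbound f₁ hf₁)
  have hi₂ := Integrable.of_bound hf₂m 1 (hbound f₂ hf₂)
  refine ⟨weightedLaw_eq_of_forall_setIntegral_preimage_eq hX (hf₁.mono fun _ h => h.1)
    (hf₂.mono fun _ h => h.1) hi₁ hi₂ heq, weightedLaw_eq_of_forall_setIntegral_preimage_eq hX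
    (hf₁.mono fun _ h => sub_nonneg.mpr h.2) (hf₂.mono fun _ h => sub_nonneg.mpr h.2)
    ((integrable_const 1).sub hi₁) ((integrable_const 1).sub hi₂) fun s hs => ?_⟩
  rw [integral_sub (integrable_const 1).integrableOn hi₁.integrableOn,
    integral_sub (integrable_const 1).integrableOn hi₂.integrableOn, heq s hs]

theorem integral_weightedLaw (hX : Measurable X) {f : Ω → ℝ} (hfm : Measurable f)
    (hf : 0 ≤ᵐ[P] f) {g : 𝒳 → ℝ} (hg : Measurable g) :
    ∫ x, g x ∂weightedLaw P X f = ∫ ω, f ω * g (X ω) ∂P := by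
  rw [weightedLaw, integral_map hX.aemeasurable hg.aestronglyMeasurable,
    integral_withDensity_eq_integral_toReal_smul hfm.ennreal_ofReal
      (ae_of_all _ fun _ => ENNReal.ofReal_lt_top)]
  refine integral_congr_ae (hf.mono fun ω hω => ?_)
  simp [ENNReal.toReal_ofReal hω]

theorem integrable_weightedLaw_iff (hX : Measurable X) {f : Ω → ℝ} (hfm : Measurable f)
    (hf : 0 ≤ᵐ[P] f) {g : 𝒳 → ℝ} (hg : Measurable g) :
    Integrable g (weightedLaw P X f) ↔ Integrable (fun ω => f ω * g (X ω)) P := by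
  rw [weightedLaw, integrable_map_measure hg.aestronglyMeasurable hX.aemeasurable,
    integrable_withDensity_iff_integrable_smul' hfm.ennreal_ofReal
      (ae_of_all _ fun _ => ENNReal.ofReal_lt_top)]
  refine integrable_congr (hf.mono fun ω hω => ?_)
  simp [ENNReal.toReal_ofReal hω]

theorem integral_mul_comp_eq_of_weightedLaw_eq (hX : Measurable X) {f₁ f₂ : Ω → ℝ}
    (hf₁m : Measurable f₁) (hf₁ : 0 ≤ᵐ[P] f₁) (hf₂m : Measurable f₂) (hf₂ : 0 ≤ᵐ[P] f₂)
    (h : weightedLaw P X f₁ = weightedLaw P X f₂) {g : 𝒳 → ℝ} (hg : Measurable g) :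
    ∫ ω, f₁ ω * g (X ω) ∂P = ∫ ω, f₂ ω * g (X ω) ∂P := by
  rw [← integral_weightedLaw hX hf₁m hf₁ hg, h, integral_weightedLaw hX hf₂m hf₂ hg]

theorem integrable_mul_comp_iff_of_weightedLaw_eq (hX : Measurable X) {f₁ f₂ : Ω → ℝ}
    (hf₁m : Measurable f₁) (hf₁ : 0 ≤ᵐ[P] f₁) (hf₂m : Measurable f₂) (hf₂ : 0 ≤ᵐ[P] f₂)
    (h : weightedLaw P X f₁ = weightedLaw P X f₂) {g : 𝒳 → ℝ} (hg : Measurable g) :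
    Integrable (fun ω => f₁ ω * g (X ω)) P ↔ Integrable (fun ω => f₂ ω * g (X ω)) P := by
  rw [← integrable_weightedLaw_iff hX hf₁m hf₁ hg, h, integrable_weightedLaw_iff hX hf₂m hf₂ hg]

theorem integral_comp_mul_control_residual_eq [IsFiniteMeasure P] {A Y : Ω → ℝ}
    {μY g h : 𝒳 → ℝ} (hX : Measurable X) (hA01 : ∀ ω, A ω = 0 ∨ A ω = 1)
    (hAmeas : Measurable A) (hg : Measurable g)
    (hμY : ∀ s : Set 𝒳, MeasurableSet s →
      ∫ ω in {ω | X ω ∈ s ∧ A ω = 0}, Y ω ∂P = ∫ ω in {ω | X ω ∈ s ∧ A ω = 0}, μY (X ω) ∂P)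
    (hY : Integrable (fun ω => (1 - A ω) * (Y ω - h (X ω))) P)
    (hμYi : Integrable (fun ω => μY (X ω)) P) (hh : Integrable (fun ω => h (X ω)) P)
    (hgY : Integrable (fun ω => g (X ω) * ((1 - A ω) * (Y ω - h (X ω)))) P)
    (hgμY : Integrable (fun ω => g (X ω) * ((1 - A ω) * (μY (X ω) - h (X ω)))) P) :
    ∫ ω, g (X ω) * ((1 - A ω) * (Y ω - h (X ω))) ∂P
      = ∫ ω, g (X ω) * ((1 - A ω) * (μY (X ω) - h (X ω))) ∂P := by
  have hA0 : MeasurableSet {ω | A ω = 0} := hAmeas (measurableSet_singleton 0)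
  have hμYh : Integrable (fun ω => (1 - A ω) * (μY (X ω) - h (X ω))) P :=
    (hμYi.sub hh).mul_of_ae_mem_Icc (measurable_const.sub hAmeas).aestronglyMeasurable
      (ae_of_all _ fun ω => by rcases hA01 ω with h | h <;> simp [h])
  refine integral_mul_eq_of_forall_setIntegral_eq hX.comap_le
    (hg.comp (comap_measurable X)).stronglyMeasurable hY hμYh hgY hgμY ?_
  rintro _ ⟨s, hs, rfl⟩
  set T := {ω | X ω ∈ s ∧ A ω = 0}
  have hTm : MeasurableSet T := (hX hs).inter hA0
  have hT : (P.restrict (X ⁻¹' s)).restrict {ω | A ω = 0} = P.restrict T := by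
    rw [Measure.restrict_restrict hA0, Set.inter_comm]; rfl
  have hYh : IntegrableOn (fun ω => Y ω - h (X ω)) T P :=
    hY.integrableOn.congr_fun (fun ω hω => by simp [hω.2]) hTm
  have hYT : IntegrableOn Y T P :=
    (hYh.add hh.integrableOn).congr_fun (fun ω _ => by simp) hTm
  rw [← setIntegral_setOf_eq_zero_eq_integral_one_sub_mul hA01 hA0,
    ← setIntegral_setOf_eq_zero_eq_integral_one_sub_mul hA01 hA0, hT,
    integral_sub hYT hh.integrableOn, integral_sub hμYi.integrableOn hh.integrableOn, hμY s hs]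

theorem integral_weighted_control_residual_eq [IsFiniteMeasure P] {A Y : Ω → ℝ}
    {πA μY w h : 𝒳 → ℝ} {ε : ℝ}
    (hε : 0 < ε) (hX : Measurable X) (hA01 : ∀ ω, A ω = 0 ∨ A ω = 1) (hAmeas : Measurable A)
    (hπmeas : Measurable πA) (hμYmeas : Measurable μY) (hwmeas : Measurable w)
    (hhmeas : Measurable h)
    (hπ : ∀ᵐ ω ∂P, πA (X ω) ∈ Set.Ioo 0 1) (hw : ∀ᵐ ω ∂P, ε ≤ w (X ω))
    (hπdef : ∀ s : Set 𝒳, MeasurableSet s →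
      ∫ ω in {ω | X ω ∈ s}, A ω ∂P = ∫ ω in {ω | X ω ∈ s}, πA (X ω) ∂P)
    (hμYdef : ∀ s : Set 𝒳, MeasurableSet s →
      ∫ ω in {ω | X ω ∈ s ∧ A ω = 0}, Y ω ∂P = ∫ ω in {ω | X ω ∈ s ∧ A ω = 0}, μY (X ω) ∂P)
    (hK : Integrable (fun ω => (1 - A ω) * w (X ω) * (Y ω - h (X ω))) P)
    (hμY : Integrable (fun ω => μY (X ω)) P) (hh : Integrable (fun ω => h (X ω)) P)
    (hu : Integrable (fun ω => (μY (X ω) - h (X ω)) * (w (X ω) / odds (πA (X ω)))) P) :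
    ∫ ω, (1 - A ω) * w (X ω) * (Y ω - h (X ω)) ∂P
      = ∫ ω, A ω * ((μY (X ω) - h (X ω)) * (w (X ω) / odds (πA (X ω)))) ∂P := by
  have hA : ∀ᵐ ω ∂P, A ω ∈ Set.Icc 0 1 :=
    ae_of_all _ fun ω => by rcases hA01 ω with h | h <;> simp [h]
  have hπm : Measurable fun ω => πA (X ω) := hπmeas.comp hX
  obtain ⟨hlaw₁, hlaw₀⟩ := weightedLaw_eq_and_one_sub_of_forall_setIntegral_preimage_eq hX
    hAmeas.aestronglyMeasurable hπm.aestronglyMeasurable hA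
    (hπ.mono fun _ h => Set.Ioo_subset_Icc_self h) hπdef
  have hwμ : Measurable fun x => w x * (μY x - h x) := hwmeas.mul (hμYmeas.sub hhmeas)
  have hu' : Measurable fun x => (μY x - h x) * (w x / odds (πA x)) :=
    (hμYmeas.sub hhmeas).mul (hwmeas.div (hπmeas.div (measurable_const.sub hπmeas)))
  have hodds : ∀ᵐ ω ∂P, (1 - πA (X ω)) * (w (X ω) * (μY (X ω) - h (X ω)))
      = πA (X ω) * ((μY (X ω) - h (X ω)) * (w (X ω) / odds (πA (X ω)))) :=
    hπ.mono fun ω hω => by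
      rw [one_sub_mul_eq_mul_div_odds hω.1.ne' hω.2.ne]; ring
  have hAm₀ : Measurable fun ω => 1 - A ω := measurable_const.sub hAmeas
  have hπm₀ : Measurable fun ω => 1 - πA (X ω) := measurable_const.sub hπm
  have hA₁ : 0 ≤ᵐ[P] A := hA.mono fun _ h => h.1
  have hA₀ : 0 ≤ᵐ[P] fun ω => 1 - A ω := hA.mono fun _ h => sub_nonneg.mpr h.2
  have hπ₁ : 0 ≤ᵐ[P] fun ω => πA (X ω) := hπ.mono fun _ h => h.1.le
  have hπ₀ : 0 ≤ᵐ[P] fun ω => 1 - πA (X ω) := hπ.mono fun _ h => sub_nonneg.mpr h.2.le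
  have hd : Integrable (fun ω => (1 - A ω) * (Y ω - h (X ω))) P :=
    (hK.congr (ae_of_all _ fun ω => by ring)).of_mul_of_ae_le (w := fun ω => w (X ω)) hε
      (hwmeas.comp hX).aemeasurable hw
  have hcontrol_int : Integrable (fun ω => (1 - A ω) * (w (X ω) * (μY (X ω) - h (X ω)))) P :=
    (integrable_mul_comp_iff_of_weightedLaw_eq hX hAm₀ hA₀ hπm₀ hπ₀ hlaw₀ hwμ).mpr
      ((hu.mul_of_ae_mem_Icc hπm.aestronglyMeasurable
        (hπ.mono fun _ h => Set.Ioo_subset_Icc_self h)).congr (hodds.mono fun _ h => h.symm))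
  calc ∫ ω, (1 - A ω) * w (X ω) * (Y ω - h (X ω)) ∂P
      = ∫ ω, w (X ω) * ((1 - A ω) * (Y ω - h (X ω))) ∂P := by congr 1 with ω; ring
    _ = ∫ ω, w (X ω) * ((1 - A ω) * (μY (X ω) - h (X ω))) ∂P :=
        integral_comp_mul_control_residual_eq hX hA01 hAmeas hwmeas hμYdef hd hμY hh
          (hK.congr (ae_of_all _ fun ω => by ring))
          (hcontrol_int.congr (ae_of_all _ fun ω => by ring))
    _ = ∫ ω, (1 - A ω) * (w (X ω) * (μY (X ω) - h (X ω))) ∂P := by congr 1 with ω; ring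
    _ = ∫ ω, (1 - πA (X ω)) * (w (X ω) * (μY (X ω) - h (X ω))) ∂P :=
        integral_mul_comp_eq_of_weightedLaw_eq hX hAm₀ hA₀ hπm₀ hπ₀ hlaw₀ hwμ
    _ = ∫ ω, πA (X ω) * ((μY (X ω) - h (X ω)) * (w (X ω) / odds (πA (X ω)))) ∂P :=
        integral_congr_ae hodds
    _ = ∫ ω, A ω * ((μY (X ω) - h (X ω)) * (w (X ω) / odds (πA (X ω)))) ∂P :=
        (integral_mul_comp_eq_of_weightedLaw_eq hX hAmeas hA₁ hπm hπ₁ hlaw₁ hu').symm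

end WeightedLaw

/-- **Population limit of the doubly robust control component.**  For arbitrary bounded
candidate functions `μ̄₀Δ` and `π̄_A` (with `ε ≤ π̄_A < 1`), the limit
`θ̄₀ = E[(A/P(A=1))·μ̄₀Δ(X) + ((1-A)/P(A=1))·(π̄_A(X)/(1-π̄_A(X)))·(Y₁-Y₀-μ̄₀Δ(X))]`
satisfies
`θ̄₀ = E[μ₀Δ(X)|A=1] + E[(μ₀Δ(X)-μ̄₀Δ(X))·{(π̄_A/(1-π̄_A))/(π_A/(1-π_A)) - 1}|A=1]`,
conditional expectations given the event `A=1` being `E[·;A=1]/P(A=1)`. -/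
theorem control_component_population_limit
    {Ω 𝒳 : Type*} [MeasurableSpace Ω] [MeasurableSpace 𝒳]
    (P : Measure Ω) [IsProbabilityMeasure P]
    (A : Ω → ℝ) (X : Ω → 𝒳) (Y0 Y1 : Ω → ℝ) (πA μ0Δ πb μb : 𝒳 → ℝ) (ε : ℝ)
    (hε : 0 < ε)
    (hA01 : ∀ ω, A ω = 0 ∨ A ω = 1)
    (hAmeas : Measurable A) (hXmeas : Measurable X)
    (hπmeas : Measurable πA) (hμmeas : Measurable μ0Δ)
    (hπbmeas : Measurable πb) (hμbmeas : Measurable μb)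
    (hPA : 0 < (P {ω | A ω = 1}).toReal)
    (hπbd : ∀ᵐ ω ∂P, ε ≤ πA (X ω) ∧ πA (X ω) < 1)
    (hπbbd : ∀ᵐ ω ∂P, ε ≤ πb (X ω) ∧ πb (X ω) < 1)
    (hμbbd : ∃ C : ℝ, ∀ x, |μb x| ≤ C)
    (hπdef : ∀ s : Set 𝒳, MeasurableSet s →
      ∫ ω in {ω | X ω ∈ s}, A ω ∂P = ∫ ω in {ω | X ω ∈ s}, πA (X ω) ∂P)
    (hμdef : ∀ s : Set 𝒳, MeasurableSet s →
      ∫ ω in {ω | X ω ∈ s ∧ A ω = 0}, (Y1 ω - Y0 ω) ∂P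
        = ∫ ω in {ω | X ω ∈ s ∧ A ω = 0}, μ0Δ (X ω) ∂P)
    (hint : Integrable (fun ω =>
      (A ω / (P {ω | A ω = 1}).toReal) * μb (X ω)
        + ((1 - A ω) / (P {ω | A ω = 1}).toReal) * (πb (X ω) / (1 - πb (X ω)))
          * ((Y1 ω - Y0 ω) - μb (X ω))) P)
    (hintμ0 : Integrable (fun ω => μ0Δ (X ω)) P)
    (hintcorr : Integrable (fun ω => (μ0Δ (X ω) - μb (X ω)) *
      ((πb (X ω) / (1 - πb (X ω))) / (πA (X ω) / (1 - πA (X ω))) - 1)) P) :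
    ∫ ω, ((A ω / (P {ω | A ω = 1}).toReal) * μb (X ω)
        + ((1 - A ω) / (P {ω | A ω = 1}).toReal) * (πb (X ω) / (1 - πb (X ω)))
          * ((Y1 ω - Y0 ω) - μb (X ω))) ∂P
      = (∫ ω in {ω | A ω = 1}, μ0Δ (X ω) ∂P) / (P {ω | A ω = 1}).toReal
        + (∫ ω in {ω | A ω = 1}, (μ0Δ (X ω) - μb (X ω)) *
            ((πb (X ω) / (1 - πb (X ω))) / (πA (X ω) / (1 - πA (X ω))) - 1) ∂P)
          / (P {ω | A ω = 1}).toReal := by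
  obtain ⟨C, hC⟩ := hμbbd
  set c := (P {ω | A ω = 1}).toReal
  have hA : ∀ᵐ ω ∂P, A ω ∈ Set.Icc 0 1 :=
    ae_of_all _ fun ω => by rcases hA01 ω with h | h <;> simp [h]
  have hA1 : MeasurableSet {ω | A ω = 1} := hAmeas (measurableSet_singleton 1)
  have hμb : Integrable (fun ω => μb (X ω)) P :=
    .of_bound (hμbmeas.comp hXmeas).aestronglyMeasurable C (ae_of_all _ fun ω => hC (X ω))
  have hK : Integrable
      (fun ω => (1 - A ω) * odds (πb (X ω)) * ((Y1 ω - Y0 ω) - μb (X ω))) P :=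
    ((hint.const_mul c).sub (hμb.mul_of_ae_mem_Icc hAmeas.aestronglyMeasurable hA)).congr
      (ae_of_all _ fun ω => by simp only [Pi.sub_apply, odds]; field_simp [hPA.ne']; ring)
  have hu : Integrable
      (fun ω => (μ0Δ (X ω) - μb (X ω)) * (odds (πb (X ω)) / odds (πA (X ω)))) P :=
    (hintcorr.add (hintμ0.sub hμb)).congr
      (ae_of_all _ fun ω => by simp only [Pi.add_apply, Pi.sub_apply, odds]; ring)
  have hcontrol := integral_weighted_control_residual_eq hε hXmeas hA01 hAmeas hπmeas hμmeas
    (w := fun x => odds (πb x)) (hπbmeas.div (measurable_const.sub hπbmeas)) hμbmeas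
    (hπbd.mono fun _ h => ⟨hε.trans_le h.1, h.2⟩)
    (hπbbd.mono fun _ h => h.1.trans (le_odds (hε.le.trans h.1) h.2)) hπdef hμdef hK
    hintμ0 hμb hu
  have hAint : ∀ {g : Ω → ℝ}, Integrable g P → Integrable (fun ω => A ω * g ω) P :=
    fun hg => hg.mul_of_ae_mem_Icc hAmeas.aestronglyMeasurable hA
  rw [setIntegral_setOf_eq_one_eq_integral_mul hA01 hA1,
    setIntegral_setOf_eq_one_eq_integral_mul hA01 hA1, ← add_div,
    ← integral_add (hAint hintμ0) (hAint hintcorr), div_eq_inv_mul]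
  calc _ = c⁻¹ * (∫ ω, A ω * μb (X ω) ∂P
        + ∫ ω, (1 - A ω) * odds (πb (X ω)) * ((Y1 ω - Y0 ω) - μb (X ω)) ∂P) := by
        rw [← integral_add (hAint hμb) hK, ← integral_const_mul]
        congr 1 with ω; simp only [odds]; ring
    _ = _ := by
        rw [hcontrol, ← integral_add (hAint hμb) (hAint hu)]
        congr 2 with ω; simp only [odds]; ring
end

section
/- The population limit of the doubly robust dose-component functional at dose δ satisfies E[ (f̄(δ|A=1)/π̄_D(δ|A=1,X))·(Y₁ − Y₀ − μ̄₁Δ(X,δ)) + m̄(δ|A=1) | A=1, D=δ ] = E[μ₁Δ(X,δ) | A=1] + ∫ (μ₁Δ(x,δ) − μ̄₁Δ(x,δ)) · { (f̄(δ|A=1)/π̄_D(δ|A=1,x)) / (f(δ|A=1)/π_D(δ|A=1,x)) − 1 } dP(x|A=1). -/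
/-!
Under Bayes' rule the law of `X` given `A = 1, D = δ` is `ν` reweighted by `π_D / f`, so the
left side is `∫ (π_D/f)(f̄/π̄_D)(μ₁Δ - μ̄₁Δ) dν + ∫ μ̄₁Δ dν`. Pointwise,
`(π_D/f)(f̄/π̄_D) = (f̄/π̄_D)/(f/π_D)`, and splitting this weight as `(weight - 1) + 1` leaves the
bias term plus `∫ (μ₁Δ - μ̄₁Δ) dν + ∫ μ̄₁Δ dν = ∫ μ₁Δ dν`.
-/

open MeasureTheory

theorem integral_withDensity_ofReal {X E : Type*} [MeasurableSpace X] [NormedAddCommGroup E]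
    [NormedSpace ℝ E] {μ : Measure X} {g : X → ℝ} (hg : AEMeasurable g μ) (hg0 : 0 ≤ᵐ[μ] g)
    (φ : X → E) :
    ∫ x, φ x ∂μ.withDensity (fun x => ENNReal.ofReal (g x)) = ∫ x, g x • φ x ∂μ := by
  rw [integral_withDensity_eq_integral_toReal_smul₀ hg.ennreal_ofReal
    (.of_forall fun _ => ENNReal.ofReal_lt_top)]
  refine integral_congr_ae ?_
  filter_upwards [hg0] with x hx
  rw [ENNReal.toReal_ofReal hx]

/-- Parameters: `ν` is the law of `X` given `A = 1`; at the fixed dose `δ`, `πD x = π_D(δ|A=1,x)`,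
`πbD x = π̄_D(δ|A=1,x)`, `μ x = μ₁Δ(x,δ)`, `μb x = μ̄₁Δ(x,δ)`, `f = f(δ|A=1)`, `fb = f̄(δ|A=1)`,
`mb = m̄(δ|A=1)`. The outer expectation over `Y₁ - Y₀` has already been reduced to `μ` by the
tower property. -/
theorem dose_component_population_limit_general
    {𝒳 : Type*} [MeasurableSpace 𝒳]
    (ν : Measure 𝒳) [IsProbabilityMeasure ν]
    (πD πbD μ μb : 𝒳 → ℝ) (f fb mb : ℝ) (ε : ℝ) (hε : 0 < ε)
    (hπDpos : ∀ x, ε ≤ πD x)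
    (hπDmeas : Measurable πD)
    (hμbmeas : Measurable μb)
    (hμbbd : ∃ C : ℝ, ∀ x, |μb x| ≤ C)
    (hf : f = ∫ x, πD x ∂ν) (hmb : mb = ∫ x, μb x ∂ν)
    (hintμ : Integrable μ ν)
    (hintcorr : Integrable (fun x => (μ x - μb x) *
      ((fb / πbD x) / (f / πD x) - 1)) ν) :
    -- `νδ` = law of `X` given `A=1, D=δ` (Bayes' rule)
    ∫ x, (fb / πbD x) * (μ x - μb x)
        ∂(ν.withDensity (fun x => ENNReal.ofReal (πD x / f))) + mb
      = ∫ x, μ x ∂ν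
        + ∫ x, (μ x - μb x) * ((fb / πbD x) / (f / πD x) - 1) ∂ν := by
  obtain ⟨C, hC⟩ := hμbbd
  have hintμb : Integrable μb ν :=
    .of_bound hμbmeas.aestronglyMeasurable C (.of_forall fun x => hC x)
  have hintdiff : Integrable (fun x => μ x - μb x) ν := hintμ.sub hintμb
  have hπD_nonneg : 0 ≤ πD := fun x => hε.le.trans (hπDpos x)
  have hf_nonneg : 0 ≤ f := hf ▸ integral_nonneg hπD_nonneg
  -- a field identity, zero denominators included (`x / 0 = 0` makes both sides vanish)
  have hweight : ∀ x, πD x / f * ((fb / πbD x) * (μ x - μb x))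
      = (μ x - μb x) * ((fb / πbD x) / (f / πD x) - 1) + (μ x - μb x) := fun x => by
    rw [div_div_eq_mul_div]; ring
  rw [integral_withDensity_ofReal (hπDmeas.div_const f).aemeasurable
    (.of_forall fun x => div_nonneg (hπD_nonneg x) hf_nonneg)]
  simp only [smul_eq_mul, hweight]
  rw [integral_add hintcorr hintdiff, integral_sub hintμ hintμb, hmb]
  ring

/-- **Population limit of the doubly robust dose component at dose `δ`.**  We work at a
fixed dose `δ` under the conditional distribution `ν` of `X` given `A=1`.  `πD x` is the
true conditional density `π_D(δ|A=1,x)`, `f = ∫ πD dν` the marginal density `f(δ|A=1)`;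
`πbD, μb` are the candidate (possibly misspecified) density and outcome models at `δ`,
with `fb = ∫ πbD dν` and `mb = ∫ μb dν`.  By Bayes' rule the conditional law `νδ` of `X`
given `A=1, D=δ` has density `πD x / f` w.r.t. `ν`.  Since
`E[Y₁-Y₀ | A=1, D=δ, X=x] = μ x` (the true trend `μ₁Δ(x,δ)`), the tower property gives
`E[(f̄/π̄_D)(Y₁-Y₀-μ̄₁Δ(X,δ)) + m̄ | A=1, D=δ] = ∫ (fb/πbD x)(μ x - μb x) νδ(dx) + mb`,
and this equals
`E[μ₁Δ(X,δ)|A=1] + ∫ (μ x - μb x)·{(fb/πbD x)/(f/πD x) - 1} ν(dx)`. -/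
theorem dose_component_population_limit
    {𝒳 : Type*} [MeasurableSpace 𝒳]
    (ν : Measure 𝒳) [IsProbabilityMeasure ν]
    (πD πbD μ μb : 𝒳 → ℝ) (f fb mb : ℝ) (ε : ℝ) (hε : 0 < ε)
    (hπDpos : ∀ x, ε ≤ πD x) (hπbDpos : ∀ x, ε ≤ πbD x)
    (hπDmeas : Measurable πD) (hπbDmeas : Measurable πbD)
    (hμmeas : Measurable μ) (hμbmeas : Measurable μb)
    (hμbbd : ∃ C : ℝ, ∀ x, |μb x| ≤ C) (hπbDbd : ∃ C : ℝ, ∀ x, πbD x ≤ C)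
    (hf : f = ∫ x, πD x ∂ν) (hfb : fb = ∫ x, πbD x ∂ν) (hmb : mb = ∫ x, μb x ∂ν)
    (hintμ : Integrable μ ν)
    (hintcorr : Integrable (fun x => (μ x - μb x) *
      ((fb / πbD x) / (f / πD x) - 1)) ν) :
    -- `νδ` = law of `X` given `A=1, D=δ` (Bayes' rule)
    ∫ x, (fb / πbD x) * (μ x - μb x)
        ∂(ν.withDensity (fun x => ENNReal.ofReal (πD x / f))) + mb
      = ∫ x, μ x ∂ν
        + ∫ x, (μ x - μb x) * ((fb / πbD x) / (f / πD x) - 1) ∂ν :=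
  dose_component_population_limit_general ν πD πbD μ μb f fb mb ε hε hπDpos hπDmeas hμbmeas hμbbd hf
    hmb hintμ hintcorr
end

section
/- If either π̄_D = π_D or μ̄₁Δ = μ₁Δ, then E[ (f̄(D|A=1)/π̄_D(D|A=1,X))·(Y₁ − Y₀ − μ̄₁Δ(X,D)) + m̄(D|A=1) | A=1, D=δ ] = E[μ₁Δ(X,δ) | A=1] for almost every δ. -/
open MeasureTheory

/-! Under `π̄_D = π_D` the inverse weight `f̄ / π̄_D` cancels the Bayes density `π_D / f` of the
law of `X` given `D = δ`, and `f̄ = f`, so the weighted residual term integrates to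
`E[μ₁Δ - μ̄₁Δ | A = 1]`, which `m̄` corrects to `E[μ₁Δ | A = 1]`. Under `μ̄₁Δ = μ₁Δ` the
residual vanishes and `m̄` is already the target. -/

section WeightedIntegral

variable {X E : Type*} [MeasurableSpace X] {μ : Measure X}
  [NormedAddCommGroup E] [NormedSpace ℝ E]

theorem integral_withDensity_ofReal_eq_integral_smul {w : X → ℝ} (hw : AEMeasurable w μ)
    (hw0 : 0 ≤ᵐ[μ] w) (g : X → E) :
    ∫ x, g x ∂μ.withDensity (fun x => ENNReal.ofReal (w x)) = ∫ x, w x • g x ∂μ := by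
  rw [integral_withDensity_eq_integral_toReal_smul₀ (f := fun x => ENNReal.ofReal (w x))
    hw.ennreal_ofReal (ae_of_all _ fun _ => ENNReal.ofReal_lt_top)]
  refine integral_congr_ae ?_
  filter_upwards [hw0] with x hx
  rw [ENNReal.toReal_ofReal hx]

theorem integral_div_mul_withDensity_ofReal_div {π : X → ℝ} (hπ : Measurable π)
    (hπ0 : ∀ x, 0 < π x) {f : ℝ} (hf : 0 < f) (c : ℝ) (h : X → ℝ) :
    ∫ x, c / π x * h x ∂μ.withDensity (fun x => ENNReal.ofReal (π x / f))
      = c / f * ∫ x, h x ∂μ := by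
  rw [integral_withDensity_ofReal_eq_integral_smul (hπ.div_const f).aemeasurable
    (ae_of_all _ fun x => div_nonneg (hπ0 x).le hf.le), ← integral_const_mul]
  refine integral_congr_ae (ae_of_all _ fun x => ?_)
  have hπx := (hπ0 x).ne'
  simp only [smul_eq_mul]
  field_simp

theorem le_integral_of_forall_le [IsProbabilityMeasure μ] {f : X → ℝ} {c : ℝ}
    (hf : Integrable f μ) (hcf : ∀ x, c ≤ f x) : c ≤ ∫ x, f x ∂μ := by
  simpa using integral_mono (integrable_const c) hf hcf

end WeightedIntegral

theorem dose_component_robustness_general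
    {𝒳 : Type*} [MeasurableSpace 𝒳]
    (ν : Measure 𝒳) [IsProbabilityMeasure ν]
    (πD πbD μ μb : 𝒳 → ℝ) (f fb mb : ℝ) (ε : ℝ) (hε : 0 < ε)
    (hπbDpos : ∀ x, ε ≤ πbD x)
    (hπbDmeas : Measurable πbD)
    (hμbmeas : Measurable μb)
    (hμbbd : ∃ C : ℝ, ∀ x, |μb x| ≤ C) (hπbDbd : ∃ C : ℝ, ∀ x, πbD x ≤ C)
    (hf : f = ∫ x, πD x ∂ν) (hfb : fb = ∫ x, πbD x ∂ν) (hmb : mb = ∫ x, μb x ∂ν)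
    (hintμ : Integrable μ ν)
    -- either the dose density model or the treated outcome model is correct:
    (hcase : πbD = πD ∨ μb = μ) :
    ∫ x, (fb / πbD x) * (μ x - μb x)
        ∂(ν.withDensity (fun x => ENNReal.ofReal (πD x / f))) + mb
      = ∫ x, μ x ∂ν := by
  rcases hcase with rfl | rfl
  · obtain ⟨Cμ, hCμ⟩ := hμbbd
    obtain ⟨Cπ, hCπ⟩ := hπbDbd
    have hπ_pos : ∀ x, 0 < πbD x := fun x => hε.trans_le (hπbDpos x)
    have hintμb : Integrable μb ν :=
      .of_bound hμbmeas.aestronglyMeasurable Cμ (ae_of_all _ hCμ)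
    have hintπ : Integrable πbD ν :=
      .of_bound hπbDmeas.aestronglyMeasurable Cπ
        (ae_of_all _ fun x => by rw [Real.norm_of_nonneg (hπ_pos x).le]; exact hCπ x)
    have hf_pos : 0 < f := hf ▸ hε.trans_le (le_integral_of_forall_le hintπ hπbDpos)
    have hfb_eq : fb = f := by rw [hf, hfb]
    rw [integral_div_mul_withDensity_ofReal_div hπbDmeas hπ_pos hf_pos, hfb_eq,
      div_self hf_pos.ne', one_mul, integral_sub hintμ hintμb, hmb, sub_add_cancel]
  · simp [hmb]

/-- **Robustness of the dose component.**  In the setting of the dose-component identity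
(at a fixed dose `δ`, with `ν` the conditional law of `X` given `A=1`, true conditional
density `πD` of `D` at `δ`, marginal `f = ∫ πD dν`, true trend
`μ x = μ₁Δ(x,δ) = E[Y₁-Y₀|A=1,D=δ,X=x]`, candidates `πbD, μb` with `fb = ∫ πbD dν`,
`mb = ∫ μb dν`, and `νδ` the law of `X` given `A=1, D=δ`, which by Bayes' rule has density
`πD x / f` w.r.t. `ν`):  if either `π̄_D = π_D` or `μ̄₁Δ = μ₁Δ`, then
`E[(f̄(D|A=1)/π̄_D(D|A=1,X))(Y₁-Y₀-μ̄₁Δ(X,D)) + m̄(D|A=1) | A=1, D=δ]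
  = E[μ₁Δ(X,δ) | A=1]`. -/
theorem dose_component_robustness
    {𝒳 : Type*} [MeasurableSpace 𝒳]
    (ν : Measure 𝒳) [IsProbabilityMeasure ν]
    (πD πbD μ μb : 𝒳 → ℝ) (f fb mb : ℝ) (ε : ℝ) (hε : 0 < ε)
    (hπDpos : ∀ x, ε ≤ πD x) (hπbDpos : ∀ x, ε ≤ πbD x)
    (hπDmeas : Measurable πD) (hπbDmeas : Measurable πbD)
    (hμmeas : Measurable μ) (hμbmeas : Measurable μb)
    (hμbbd : ∃ C : ℝ, ∀ x, |μb x| ≤ C) (hπbDbd : ∃ C : ℝ, ∀ x, πbD x ≤ C)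
    (hf : f = ∫ x, πD x ∂ν) (hfb : fb = ∫ x, πbD x ∂ν) (hmb : mb = ∫ x, μb x ∂ν)
    (hintμ : Integrable μ ν)
    -- either the dose density model or the treated outcome model is correct:
    (hcase : πbD = πD ∨ μb = μ) :
    ∫ x, (fb / πbD x) * (μ x - μb x)
        ∂(ν.withDensity (fun x => ENNReal.ofReal (πD x / f))) + mb
      = ∫ x, μ x ∂ν :=
  dose_component_robustness_general ν πD πbD μ μb f fb mb ε hε hπbDpos hπbDmeas hμbmeas hμbbd hπbDbd
    hf hfb hmb hintμ hcase
end
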